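/- (Average-latency transfer of the reduction in Theorem 1) Let there be m machines and n jobs as in the unit-time open shop, and suppose there exists a unit-time open-shop schedule t(i, j) (for each fixed machine the job times are pairwise distinct and for each fixed job the operation times are pairwise distinct) whose mean flow time satisfies (1/n)·Σ_{i=1}^{n} (max_j t(i, j) − min_j t(i, j)) ≤ T. Then there exists a conflict-free broadcast schedule on m channels for the n corresponding requests (each request q_i consisting of the m data items of job i, the j-th item on channel j) with at most one item per (channel, slot) pair, whose average access time satisfies (1/n)·Σ_{i=1}^{n} acc(q_i) ≤ 3T. -/

import Mathlib

/-- The spread (max minus min) of a function `f : Fin m → ℕ`, for `m > 0`.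
Used both for the flow time of a job (finish time minus release time) and for
the access time of a request (max slot minus min slot). -/
def spread {m : ℕ} (hm : 0 < m) (f : Fin m → ℕ) : ℕ :=
  (Finset.univ.image f).max' ((Finset.univ_nonempty_iff.mpr ⟨⟨0, hm⟩⟩).image f) -
  (Finset.univ.image f).min' ((Finset.univ_nonempty_iff.mpr ⟨⟨0, hm⟩⟩).image f)

/-
Stretching every open-shop time by a factor of three turns distinct operation times of a job
into slots at least three apart, so no two items of a request sit in adjacent slots, while every
spread, and hence the mean access time, grows by exactly the factor three.
-/

theorem spread_const_mul {m : ℕ} (hm : 0 < m) (f : Fin m → ℕ) (c : ℕ) :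
    spread hm (fun j => c * f j) = c * spread hm f := by
  have hne := (Finset.univ_nonempty_iff.mpr ⟨(⟨0, hm⟩ : Fin m)⟩).image f
  have himg : Finset.univ.image (fun j => c * f j) = (Finset.univ.image f).image (c * ·) := by
    rw [Finset.image_image]; rfl
  have hmono : Monotone (c * · : ℕ → ℕ) := fun _ _ h => Nat.mul_le_mul_left c h
  unfold spread
  simp_rw [himg, Finset.max'_image hmono _ (hne.image _), Finset.min'_image hmono _ (hne.image _)]
  rw [← Nat.mul_sub]

theorem one_lt_abs_mul_sub_mul {c a b : ℕ} (hc : 2 ≤ c) (hab : a ≠ b) :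
    1 < |((c * a : ℕ) : ℤ) - ((c * b : ℕ) : ℤ)| := by
  have hd : 1 ≤ |(a : ℤ) - b| := Int.one_le_abs (sub_ne_zero.mpr (by exact_mod_cast hab))
  have hc' : (2 : ℤ) ≤ c := by exact_mod_cast hc
  push_cast
  rw [← mul_sub, abs_mul, abs_of_nonneg (by positivity)]
  nlinarith

theorem mmuos_to_cdbml_avg_latency_general {n m : ℕ} (hm : 0 < m) (T : ℝ)
    (t : Fin n → Fin m → ℕ)
    (hmach : ∀ j, ∀ i i' : Fin n, t i j = t i' j → i = i')
    (hjob : ∀ i : Fin n, ∀ j j' : Fin m, t i j = t i j' → j = j')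
    (hmean : (1 / (n : ℝ)) * ∑ i : Fin n, (spread hm (t i) : ℝ) ≤ T) :
    ∃ p : Fin n → Fin m → ℕ,
      (∀ j, ∀ i i' : Fin n, p i j = p i' j → i = i') ∧
      (∀ i : Fin n, ∀ j j' : Fin m, j ≠ j' → |(p i j : ℤ) - (p i j' : ℤ)| > 1) ∧
      (1 / (n : ℝ)) * ∑ i : Fin n, (spread hm (p i) : ℝ) ≤ 3 * T := by
  refine ⟨fun i j => 3 * t i j, ?_, ?_, ?_⟩
  · exact fun j i i' h => hmach j i i' (Nat.eq_of_mul_eq_mul_left three_pos h)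
  · exact fun i j j' hjj => one_lt_abs_mul_sub_mul (by norm_num) fun h => hjj (hjob i j j' h)
  · calc (1 / (n : ℝ)) * ∑ i, (spread hm (fun j => 3 * t i j) : ℝ)
        = 3 * ((1 / (n : ℝ)) * ∑ i, (spread hm (t i) : ℝ)) := by
          simp only [spread_const_mul, Nat.cast_mul, Nat.cast_ofNat, ← Finset.mul_sum]
          ring
      _ ≤ 3 * T := by linarith

/-- (Average-latency transfer of the reduction in Theorem 1.) If there is a
unit-time open-shop schedule `t` for `n` jobs on `m` machines whose mean flow
time is at most `T`, then there is a conflict-free broadcast schedule on `m`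
channels for the `n` corresponding requests (the `j`-th item of request `i`
being placed on channel `j`), with at most one item per (channel, slot) pair,
whose average access time is at most `3 * T`. -/
theorem mmuos_to_cdbml_avg_latency {n m : ℕ} (hn : 0 < n) (hm : 0 < m) (T : ℝ)
    (t : Fin n → Fin m → ℕ)
    (hmach : ∀ j, ∀ i i' : Fin n, t i j = t i' j → i = i')
    (hjob : ∀ i : Fin n, ∀ j j' : Fin m, t i j = t i j' → j = j')
    (hmean : (1 / (n : ℝ)) * ∑ i : Fin n, (spread hm (t i) : ℝ) ≤ T) :
    ∃ p : Fin n → Fin m → ℕ,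
      (∀ j, ∀ i i' : Fin n, p i j = p i' j → i = i') ∧
      (∀ i : Fin n, ∀ j j' : Fin m, j ≠ j' → |(p i j : ℤ) - (p i j' : ℤ)| > 1) ∧
      (1 / (n : ℝ)) * ∑ i : Fin n, (spread hm (p i) : ℝ) ≤ 3 * T :=
  mmuos_to_cdbml_avg_latency_general hm T t hmach hjob hmean
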